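/- For all real numbers a, c, every natural number N ≥ 1, and every real b with b + c > 2·N·π + |a| + 1, the map F(x, y, z) = (y, sin z, a + b·x + c·y − sin(z²)) has at least 2N distinct fixed points in ℝ³. -/

import Mathlib

/-!
A fixed point of `sinusoidalMap a b c` is `(sin z, sin z, z)` with `z` a zero of
`g z = a + (b + c) sin z - sin (z²) - z`. At the points `tⱼ = jπ - π/2`, where `sin tⱼ = ±1`
with alternating sign, the term `(b + c) sin tⱼ` dominates the rest of `g` as long as
`|tⱼ| < 2Nπ`, so `g` changes sign on each of the `2N` intervals `(tⱼ, tⱼ₊₁)`, `j < 2N`, and the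
intermediate value theorem gives a zero in each of them.
-/

/-- The 3D sinusoidal map `F(x, y, z) = (y, sin z, a + b·x + c·y − sin(z²))`. -/
noncomputable def sinusoidalMap (a b c : ℝ) (p : ℝ × ℝ × ℝ) : ℝ × ℝ × ℝ :=
  (p.2.1, Real.sin p.2.2, a + b * p.1 + c * p.2.1 - Real.sin (p.2.2 ^ 2))

open Real Set

theorem exists_mem_Ioo_eq_zero_of_mul_neg {f : ℝ → ℝ} {a b : ℝ} (hab : a ≤ b)
    (hf : ContinuousOn f (Icc a b)) (hsign : f a * f b < 0) : ∃ x ∈ Ioo a b, f x = 0 := by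
  rcases mul_neg_iff.mp hsign with ⟨hfa, hfb⟩ | ⟨hfa, hfb⟩
  · exact intermediate_value_Ioo' hab hf ⟨hfb, hfa⟩
  · exact intermediate_value_Ioo hab hf ⟨hfa, hfb⟩

theorem exists_finset_card_eq_of_mul_neg {f : ℝ → ℝ} (hf : Continuous f) {t : ℕ → ℝ}
    (ht : Monotone t) {n : ℕ} (hsign : ∀ j < n, f (t j) * f (t (j + 1)) < 0) :
    ∃ S : Finset ℝ, S.card = n ∧ ∀ x ∈ S, f x = 0 := by
  have hzero (j : Fin n) : ∃ x ∈ Ioo (t j) (t (j + 1)), f x = 0 :=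
    exists_mem_Ioo_eq_zero_of_mul_neg (ht (Nat.le_succ j)) hf.continuousOn (hsign j j.isLt)
  choose z hz_mem hz_zero using hzero
  have hz_mono : StrictMono z := fun i j hij =>
    calc z i < t (i + 1) := (hz_mem i).2
      _ ≤ t j := ht (Nat.succ_le_of_lt hij)
      _ < z j := (hz_mem j).1
  refine ⟨Finset.univ.map ⟨z, hz_mono.injective⟩, by simp, ?_⟩
  simpa using hz_zero

noncomputable def sinusoidalFixedPointDefect (a k z : ℝ) : ℝ :=
  a + k * sin z - sin (z ^ 2) - z

theorem sinusoidalMap_eq_self_of_defect_eq_zero {a b c z : ℝ}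
    (hz : sinusoidalFixedPointDefect a (b + c) z = 0) :
    sinusoidalMap a b c (sin z, sin z, z) = (sin z, sin z, z) := by
  simp only [sinusoidalFixedPointDefect] at hz
  simp only [sinusoidalMap, Prod.mk.injEq, true_and]
  linarith

theorem mul_sinusoidalFixedPointDefect_pos {a k z : ℝ} (hsin : |sin z| = 1)
    (hk : |a| + 1 + |z| < k) : 0 < sin z * sinusoidalFixedPointDefect a k z := by
  have hsq : sin z * sin z = 1 := by rw [← abs_mul_abs_self, hsin, one_mul]
  have hrest : |sin z * (a - sin (z ^ 2) - z)| ≤ |a| + 1 + |z| := by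
    rw [abs_mul, hsin, one_mul]
    calc |a - sin (z ^ 2) - z| ≤ |a - sin (z ^ 2)| + |z| := abs_sub _ _
      _ ≤ |a| + |sin (z ^ 2)| + |z| := by gcongr; exact abs_sub _ _
      _ ≤ |a| + 1 + |z| := by gcongr; exact abs_sin_le_one _
  have hsplit : sin z * sinusoidalFixedPointDefect a k z = k + sin z * (a - sin (z ^ 2) - z) := by
    unfold sinusoidalFixedPointDefect; linear_combination k * hsq
  rw [hsplit]
  linarith [neg_abs_le (sin z * (a - sin (z ^ 2) - z))]

theorem sin_nat_mul_pi_sub_pi_div_two (j : ℕ) : sin (j * π - π / 2) = -(-1) ^ j := by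
  rw [sin_sub_pi_div_two, cos_nat_mul_pi]

theorem sinusoidalFixedPointDefect_mul_neg {a k : ℝ} {N j : ℕ} (hj : j < 2 * N)
    (hk : 2 * N * π + |a| + 1 < k) :
    sinusoidalFixedPointDefect a k (j * π - π / 2) *
      sinusoidalFixedPointDefect a k ((j + 1 : ℕ) * π - π / 2) < 0 := by
  have habs (i : ℕ) (hi : i ≤ 2 * N) : |(i * π - π / 2 : ℝ)| < 2 * N * π := by
    have hiN : (i : ℝ) ≤ 2 * N := by exact_mod_cast hi
    have hN : (1 : ℝ) ≤ N := by exact_mod_cast (by omega : 1 ≤ N)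
    rw [abs_lt]
    constructor <;> nlinarith [pi_pos]
  have hsin (i : ℕ) : |sin (i * π - π / 2)| = 1 := by
    rw [sin_nat_mul_pi_sub_pi_div_two]; simp
  have hpos (i : ℕ) (hi : i ≤ 2 * N) := mul_sinusoidalFixedPointDefect_pos (hsin i)
    (by linarith [habs i hi] : |a| + 1 + |(i * π - π / 2 : ℝ)| < k)
  have h₀ := hpos j hj.le
  have h₁ := hpos (j + 1) hj
  rw [sin_nat_mul_pi_sub_pi_div_two] at h₀ h₁
  rw [pow_succ] at h₁
  rcases neg_one_pow_eq_or ℝ j with h | h <;> rw [h] at h₀ h₁ <;> nlinarith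

theorem sinusoidalMap_has_at_least_two_N_fixed_points_general
    (a c : ℝ) (N : ℕ) (b : ℝ)
    (hbc : b + c > 2 * N * Real.pi + |a| + 1) :
    ∃ S : Finset (ℝ × ℝ × ℝ), 2 * N ≤ S.card ∧
      ∀ p ∈ S, sinusoidalMap a b c p = p := by
  have hcont : Continuous (sinusoidalFixedPointDefect a (b + c)) := by
    unfold sinusoidalFixedPointDefect; fun_prop
  have hmono : Monotone fun j : ℕ => (j : ℝ) * π - π / 2 := fun _ _ hij => by
    dsimp only; gcongr
  obtain ⟨Z, hcard, hZ⟩ := exists_finset_card_eq_of_mul_neg hcont hmono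
    fun j hj => sinusoidalFixedPointDefect_mul_neg hj hbc
  let lift : ℝ ↪ ℝ × ℝ × ℝ := ⟨fun z => (sin z, sin z, z), fun _ _ h => congrArg (·.2.2) h⟩
  refine ⟨Z.map lift, by rw [Finset.card_map, hcard], ?_⟩
  simp only [Finset.mem_map]
  rintro _ ⟨z, hz, rfl⟩
  exact sinusoidalMap_eq_self_of_defect_eq_zero (hZ z hz)

/-- For all real numbers `a, c`, every natural number `N ≥ 1`, and every real `b`
with `b + c > 2·N·π + |a| + 1`, the map `F(x, y, z) = (y, sin z, a + b·x + c·y − sin(z²))` has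
at least `2N` distinct fixed points in `ℝ³`. -/
theorem sinusoidalMap_has_at_least_two_N_fixed_points
    (a c : ℝ) (N : ℕ) (hN : 1 ≤ N) (b : ℝ)
    (hbc : b + c > 2 * N * Real.pi + |a| + 1) :
    ∃ S : Finset (ℝ × ℝ × ℝ), 2 * N ≤ S.card ∧
      ∀ p ∈ S, sinusoidalMap a b c p = p :=
  sinusoidalMap_has_at_least_two_N_fixed_points_general a c N b hbc
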